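/- Let g ∈ Y, let u ∈ X satisfy b(u,v) = ⟨g,v⟩_Y for all v ∈ Y (the space-time variational formulation of the heat equation with right-hand side represented by g), and let u_h ∈ X_h satisfy the Galerkin equations b(u_h, v_h) = ⟨g, v_h⟩_Y for all v_h ∈ Y_h. Then the quasi-optimal error estimate ‖u − u_h‖_{X_h} ≤ 5·inf over z_h ∈ X_h of ‖u − z_h‖_X holds. (This is the Cea-type estimate (2.8) for the space-time finite element approximation of the state equation.) -/

import Mathlib

open scoped RealInnerProductSpace

/-- The space-time bilinear form `b(u,v) = ⟨W u, v⟩_Y + ⟨ι u, v⟩_Y`. -/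
noncomputable def bform {X Y : Type*} [NormedAddCommGroup X] [InnerProductSpace ℝ X]
    [NormedAddCommGroup Y] [InnerProductSpace ℝ Y]
    (ι W : X →L[ℝ] Y) (u : X) (v : Y) : ℝ :=
  ⟪W u, v⟫ + ⟪ι u, v⟫

/-- The discrete norm `‖u‖_{X_h} = (‖P_h W u‖_Y² + ‖ι u‖_Y²)^{1/2}`,
where `P_h` is the `Y`-orthogonal projection onto `Y_h`. -/
noncomputable def discNorm {X Y : Type*} [NormedAddCommGroup X] [InnerProductSpace ℝ X]
    [NormedAddCommGroup Y] [InnerProductSpace ℝ Y]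
    (ι W : X →L[ℝ] Y) (Yh : Submodule ℝ Y) [CompleteSpace Yh] (u : X) : ℝ :=
  Real.sqrt (‖(Yh.orthogonalProjectionOnto (W u) : Y)‖ ^ 2 + ‖ι u‖ ^ 2)

/-- Minkowski inequality in ℝ². -/
lemma minkowski2 (a b a' b' : ℝ) :
    Real.sqrt ((a + a') ^ 2 + (b + b') ^ 2) ≤
      Real.sqrt (a ^ 2 + b ^ 2) + Real.sqrt (a' ^ 2 + b' ^ 2) := by
  set s := Real.sqrt (a ^ 2 + b ^ 2) with hs
  set t := Real.sqrt (a' ^ 2 + b' ^ 2) with ht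
  have hs0 : 0 ≤ s := Real.sqrt_nonneg _
  have ht0 : 0 ≤ t := Real.sqrt_nonneg _
  have hs2 : s ^ 2 = a ^ 2 + b ^ 2 := Real.sq_sqrt (by positivity)
  have ht2 : t ^ 2 = a' ^ 2 + b' ^ 2 := Real.sq_sqrt (by positivity)
  have key : a * a' + b * b' ≤ s * t := by
    nlinarith [sq_nonneg (a * b' - a' * b), mul_nonneg hs0 ht0, sq_nonneg (s * t - a * a' - b * b'),
      sq_nonneg (s - t), sq_nonneg (s + t)]
  have : (a + a') ^ 2 + (b + b') ^ 2 ≤ (s + t) ^ 2 := by nlinarith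
  calc Real.sqrt ((a + a') ^ 2 + (b + b') ^ 2) ≤ Real.sqrt ((s + t) ^ 2) :=
        Real.sqrt_le_sqrt this
    _ = s + t := Real.sqrt_sq (by positivity)

lemma sqrt_mono2 {a b c d : ℝ} (ha : 0 ≤ a) (hb : 0 ≤ b) (hac : a ≤ c) (hbd : b ≤ d) :
    Real.sqrt (a ^ 2 + b ^ 2) ≤ Real.sqrt (c ^ 2 + d ^ 2) := by
  apply Real.sqrt_le_sqrt
  nlinarith

/-- The Cea-type quasi-optimal error estimate (2.8) for the state equation. -/
theorem cea_estimate
    {X Y : Type*} [NormedAddCommGroup X] [InnerProductSpace ℝ X] [CompleteSpace X]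
    [NormedAddCommGroup Y] [InnerProductSpace ℝ Y] [CompleteSpace Y]
    (ι W : X →L[ℝ] Y)
    (hnorm : ∀ u : X, ‖u‖ ^ 2 = ‖W u‖ ^ 2 + ‖ι u‖ ^ 2)
    (hpos : ∀ u : X, 0 ≤ ⟪W u, ι u⟫)
    (Yh : Submodule ℝ Y) [CompleteSpace Yh]
    (Xh : Submodule ℝ X) [CompleteSpace Xh] (hXhYh : ∀ u ∈ Xh, ι u ∈ Yh)
    (g : Y) (u : X) (hu : ∀ v : Y, bform ι W u v = ⟪g, v⟫)
    (uh : X) (huhm : uh ∈ Xh) (huh : ∀ vh ∈ Yh, bform ι W uh vh = ⟪g, vh⟫) :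
    discNorm ι W Yh (u - uh) ≤ 5 * sInf {r : ℝ | ∃ zh ∈ Xh, r = ‖u - zh‖} := by
  classical
  set P : Y → Y := fun y => (Yh.orthogonalProjectionOnto y : Y) with hP
  -- basic projection facts
  have proj_inner : ∀ (v : Y) {w : Y}, w ∈ Yh → ⟪P v, w⟫ = ⟪v, w⟫ := by
    intro v w hw
    have h0 : ⟪v - (Yh.orthogonalProjectionOnto v : Y), w⟫ = 0 := Yh.starProjection_inner_eq_zero v w hw
    rw [inner_sub_left] at h0
    simp only [hP]
    linarith
  have proj_norm_le : ∀ v : Y, ‖P v‖ ≤ ‖v‖ := by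
    intro v
    have h1 : ‖Yh.orthogonalProjectionOnto v‖ ≤ ‖Yh.orthogonalProjectionOnto‖ * ‖v‖ :=
      (Yh.orthogonalProjectionOnto).le_opNorm v
    have h2 : ‖Yh.orthogonalProjectionOnto‖ ≤ 1 := Yh.orthogonalProjectionOnto_norm_le
    have h3 : ‖(Yh.orthogonalProjectionOnto v : Y)‖ = ‖Yh.orthogonalProjectionOnto v‖ := rfl
    simp only [hP]
    nlinarith [norm_nonneg v]
  have proj_mem : ∀ v : Y, P v ∈ Yh := fun v => (Yh.orthogonalProjectionOnto v).2
  -- norm bounds from hnorm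
  have hW_le : ∀ m : X, ‖W m‖ ≤ ‖m‖ := by
    intro m
    have := hnorm m
    nlinarith [norm_nonneg (W m), norm_nonneg m, sq_nonneg (‖ι m‖)]
  have hι_le : ∀ m : X, ‖ι m‖ ≤ ‖m‖ := by
    intro m
    have := hnorm m
    nlinarith [norm_nonneg (ι m), norm_nonneg m, sq_nonneg (‖W m‖)]
  -- Galerkin orthogonality
  have galerkin : ∀ vh ∈ Yh, bform ι W (u - uh) vh = 0 := by
    intro vh hvh
    have h1 := hu vh
    have h2 := huh vh hvh
    simp only [bform, map_sub, inner_sub_left] at *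
    linarith
  -- discNorm u ≤ ‖u‖ for all u
  have disc_le_norm : ∀ m : X, discNorm ι W Yh m ≤ ‖m‖ := by
    intro m
    have h1 : discNorm ι W Yh m ≤ Real.sqrt (‖W m‖ ^ 2 + ‖ι m‖ ^ 2) :=
      sqrt_mono2 (norm_nonneg _) (norm_nonneg _) (proj_norm_le (W m)) le_rfl
    rw [← hnorm m] at h1
    rwa [Real.sqrt_sq (norm_nonneg m)] at h1
  -- key stability estimate: for zh ∈ Xh, discNorm (zh - uh) ≤ 2 ‖u - zh‖
  have stability : ∀ zh ∈ Xh, discNorm ι W Yh (zh - uh) ≤ 2 * ‖u - zh‖ := by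
    intro zh hzh
    set φ : X := zh - uh with hφ
    have hφm : φ ∈ Xh := Submodule.sub_mem Xh hzh huhm
    set vh : Y := P (W φ) + ι φ with hvh
    have hvhm : vh ∈ Yh := Submodule.add_mem Yh (proj_mem _) (hXhYh φ hφm)
    have hιφ : ι φ ∈ Yh := hXhYh φ hφm
    -- b(φ, vh) = ‖vh‖²
    have hb_eq : bform ι W φ vh = ‖vh‖ ^ 2 := by
      have e1 : ⟪W φ, vh⟫ = ⟪P (W φ), vh⟫ := (proj_inner (W φ) hvhm).symm
      have : bform ι W φ vh = ⟪P (W φ) + ι φ, vh⟫ := by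
        rw [bform, e1, ← inner_add_left]
      rw [this, ← hvh, real_inner_self_eq_norm_sq]
    -- discNorm φ ≤ ‖vh‖
    have hdisc_le_vh : discNorm ι W Yh φ ≤ ‖vh‖ := by
      have hcross : 0 ≤ ⟪P (W φ), ι φ⟫ := by
        rw [proj_inner (W φ) hιφ]; exact hpos φ
      have hv2 : ‖vh‖ ^ 2 = ‖P (W φ)‖ ^ 2 + ‖ι φ‖ ^ 2 + 2 * ⟪P (W φ), ι φ⟫ := by
        rw [hvh, ← real_inner_self_eq_norm_sq, ← real_inner_self_eq_norm_sq,
          ← real_inner_self_eq_norm_sq]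
        rw [inner_add_add_self, real_inner_comm (ι φ) (P (W φ))]
        ring
      have : discNorm ι W Yh φ ≤ Real.sqrt (‖vh‖ ^ 2) := by
        apply Real.sqrt_le_sqrt
        rw [hv2]
        simp only [hP]
        linarith
      rwa [Real.sqrt_sq (norm_nonneg _)] at this
    -- b(φ, vh) = b(zh - u, vh) ≤ 2 ‖u - zh‖ ‖vh‖
    have hb_bound : bform ι W φ vh ≤ 2 * ‖u - zh‖ * ‖vh‖ := by
      have hsplit : bform ι W φ vh = bform ι W (zh - u) vh + bform ι W (u - uh) vh := by
        simp only [hφ, bform, map_sub, inner_sub_left]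
        ring
      rw [hsplit, galerkin vh hvhm, add_zero]
      have h1 : bform ι W (zh - u) vh = ⟪W (zh - u) + ι (zh - u), vh⟫ := by
        rw [bform, inner_add_left]
      rw [h1]
      calc ⟪W (zh - u) + ι (zh - u), vh⟫ ≤ ‖W (zh - u) + ι (zh - u)‖ * ‖vh‖ :=
            real_inner_le_norm _ _
        _ ≤ (‖W (zh - u)‖ + ‖ι (zh - u)‖) * ‖vh‖ := by
            gcongr; exact norm_add_le _ _
        _ ≤ (‖zh - u‖ + ‖zh - u‖) * ‖vh‖ := by
            gcongr <;> [exact hW_le _; exact hι_le _]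
        _ = 2 * ‖u - zh‖ * ‖vh‖ := by rw [norm_sub_rev]; ring
    -- conclude ‖vh‖ ≤ 2‖u - zh‖
    have hvh_le : ‖vh‖ ≤ 2 * ‖u - zh‖ := by
      have h2 : ‖vh‖ ^ 2 ≤ 2 * ‖u - zh‖ * ‖vh‖ := by rw [← hb_eq]; exact hb_bound
      nlinarith [norm_nonneg vh, norm_nonneg (u - zh)]
    exact hdisc_le_vh.trans hvh_le
  -- main estimate: for each zh ∈ Xh, discNorm (u - uh) ≤ 5 ‖u - zh‖
  have main : ∀ zh ∈ Xh, discNorm ι W Yh (u - uh) ≤ 5 * ‖u - zh‖ := by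
    intro zh hzh
    have htri : discNorm ι W Yh (u - uh) ≤
        discNorm ι W Yh (u - zh) + discNorm ι W Yh (zh - uh) := by
      have hsum : u - uh = (u - zh) + (zh - uh) := by abel
      rw [hsum]
      unfold discNorm
      have e1 : (Yh.orthogonalProjectionOnto (W ((u - zh) + (zh - uh))) : Y) =
          (Yh.orthogonalProjectionOnto (W (u - zh)) : Y) +
          (Yh.orthogonalProjectionOnto (W (zh - uh)) : Y) := by
        rw [map_add, map_add]; rfl
      have e2 : ι ((u - zh) + (zh - uh)) = ι (u - zh) + ι (zh - uh) := map_add _ _ _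
      rw [e1, e2]
      calc Real.sqrt (‖(Yh.orthogonalProjectionOnto (W (u - zh)) : Y) +
              (Yh.orthogonalProjectionOnto (W (zh - uh)) : Y)‖ ^ 2 +
              ‖ι (u - zh) + ι (zh - uh)‖ ^ 2)
          ≤ Real.sqrt ((‖(Yh.orthogonalProjectionOnto (W (u - zh)) : Y)‖ +
              ‖(Yh.orthogonalProjectionOnto (W (zh - uh)) : Y)‖) ^ 2 +
              (‖ι (u - zh)‖ + ‖ι (zh - uh)‖) ^ 2) :=
            sqrt_mono2 (norm_nonneg _) (norm_nonneg _) (norm_add_le _ _) (norm_add_le _ _)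
        _ ≤ _ := minkowski2 _ _ _ _
    have h1 : discNorm ι W Yh (u - zh) ≤ ‖u - zh‖ := disc_le_norm _
    have h2 : discNorm ι W Yh (zh - uh) ≤ 2 * ‖u - zh‖ := stability zh hzh
    have h3 : (0:ℝ) ≤ ‖u - zh‖ := norm_nonneg _
    linarith
  -- pass to the infimum
  set S : Set ℝ := {r : ℝ | ∃ zh ∈ Xh, r = ‖u - zh‖} with hS
  have hne : S.Nonempty := ⟨‖u - 0‖, 0, Submodule.zero_mem Xh, rfl⟩
  have hlb : discNorm ι W Yh (u - uh) / 5 ≤ sInf S := by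
    apply le_csInf hne
    rintro r ⟨zh, hzh, rfl⟩
    have := main zh hzh
    linarith
  linarith
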